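/- A topological space X is perfectly normal if and only if for every continuous map χ : X → V there exists a continuous map λ : X → J with π_J ∘ λ = χ. -/

import Mathlib

open unitInterval

/-- The interval with topologically doubled endpoints: `[0,1]` together with extra points
`0' = Sum.inr false` and `1' = Sum.inr true`, where `0'` is topologically indistinguishable
from `0` and `1'` is topologically indistinguishable from `1`. -/
def J : Type := unitInterval ⊕ Bool

instance : TopologicalSpace J where
  IsOpen U := IsOpen (Sum.inl ⁻¹' U : Set unitInterval) ∧
    (Sum.inr false ∈ U ↔ Sum.inl (0 : unitInterval) ∈ U) ∧
    (Sum.inr true ∈ U ↔ Sum.inl (1 : unitInterval) ∈ U)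
  isOpen_univ := ⟨isOpen_univ, Iff.rfl, Iff.rfl⟩
  isOpen_inter U V hU hV := ⟨hU.1.inter hV.1,
    and_congr hU.2.1 hV.2.1, and_congr hU.2.2 hV.2.2⟩
  isOpen_sUnion S hS := by
    refine ⟨?_, ?_, ?_⟩
    · first
        | (erw [Set.preimage_sUnion]; exact isOpen_biUnion fun U hU => (hS U hU).1)
        | exact isOpen_iff_forall_mem_open.mpr fun x ⟨U, hU, hx⟩ =>
            ⟨Sum.inl ⁻¹' U, Set.preimage_mono (Set.subset_sUnion_of_mem hU), (hS U hU).1, hx⟩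
    · constructor
      · rintro ⟨U, hU, hmem⟩
        exact ⟨U, hU, (hS U hU).2.1.mp hmem⟩
      · rintro ⟨U, hU, hmem⟩
        exact ⟨U, hU, (hS U hU).2.1.mpr hmem⟩
    · constructor
      · rintro ⟨U, hU, hmem⟩
        exact ⟨U, hU, (hS U hU).2.2.mp hmem⟩
      · rintro ⟨U, hU, hmem⟩
        exact ⟨U, hU, (hS U hU).2.2.mpr hmem⟩

/-- The three-point space with an open point `c` and two closed points `L`, `R`. -/
inductive V : Type
  | L | c | R

instance : TopologicalSpace V where
  IsOpen U := (V.L ∈ U → V.c ∈ U) ∧ (V.R ∈ U → V.c ∈ U)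
  isOpen_univ := ⟨fun _ => trivial, fun _ => trivial⟩
  isOpen_inter U W hU hW := ⟨fun h => ⟨hU.1 h.1, hW.1 h.2⟩, fun h => ⟨hU.2 h.1, hW.2 h.2⟩⟩
  isOpen_sUnion S hS := by
    constructor
    · rintro ⟨U, hU, hmem⟩
      exact ⟨U, hU, (hS U hU).1 hmem⟩
    · rintro ⟨U, hU, hmem⟩
      exact ⟨U, hU, (hS U hU).2 hmem⟩

/-- The map `π_J : J → V` sending `0` and `0'` to `L`, `1` and `1'` to `R`, and the open
interval `(0,1)` to the open point `c`. -/
noncomputable def piJ : J → V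
  | Sum.inr false => V.L
  | Sum.inr true => V.R
  | Sum.inl x => if x = 0 then V.L else if x = 1 then V.R else V.c

/-!
A continuous map `χ : X → V` is the same thing as a pair of disjoint closed sets, its fibres
over `L` and `R`. Collapsing `0'` to `0` and `1'` to `1` is a map `J → [0,1]` inducing the
topology of `J`, so a lift of `χ` through `π_J` amounts to a continuous `f : X → [0,1]` with
`f⁻¹{0} = χ⁻¹{L}` and `f⁻¹{1} = χ⁻¹{R}`. The lifting property therefore says that disjoint
closed sets are precisely separated, which characterizes perfect normality: if `s` and `t` are
the zero sets of `f, g ≥ 0`, then `f / (f + g)` separates them precisely.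
-/

open Set Topology

section PreciseSeparation

variable {X : Type*} [TopologicalSpace X]

def PreciselySeparated (s t : Set X) : Prop :=
  ∃ f : C(X, I), f ⁻¹' {0} = s ∧ f ⁻¹' {1} = t

theorem PerfectlyNormalSpace.preciselySeparated [PerfectlyNormalSpace X] {s t : Set X}
    (hs : IsClosed s) (ht : IsClosed t) (hst : Disjoint s t) : PreciselySeparated s t := by
  obtain ⟨f, rfl, hf⟩ := perfectlyNormalSpace_iff_forall_isClosed_preimage_zero.mp ‹_› s hs
  obtain ⟨g, rfl, hg⟩ := perfectlyNormalSpace_iff_forall_isClosed_preimage_zero.mp ‹_› t ht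
  have hpos (x : X) : 0 < f x + g x := by
    rcases (hf x).1.eq_or_lt with hfx | hfx
    · have hgx : g x ≠ 0 := fun hgx => hst.ne_of_mem hfx.symm hgx rfl
      have := (hg x).1
      positivity
    · linarith [(hg x).1]
  refine ⟨⟨fun x => ⟨f x / (f x + g x),
      div_mem (hf x).1 (hpos x).le (le_add_of_nonneg_right (hg x).1)⟩,
    (f.continuous.div₀ (f.continuous.add g.continuous) fun x => (hpos x).ne').subtype_mk _⟩,
    ?_, ?_⟩ <;> ext x
  · simp [Subtype.ext_iff, (hpos x).ne']
  · simp [Subtype.ext_iff, div_eq_one_iff_eq (hpos x).ne']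

theorem perfectlyNormalSpace_iff_preciselySeparated :
    PerfectlyNormalSpace X ↔ ∀ s t : Set X, IsClosed s → IsClosed t → Disjoint s t →
      PreciselySeparated s t := by
  refine ⟨fun _ s t => PerfectlyNormalSpace.preciselySeparated, fun h => ?_⟩
  refine perfectlyNormalSpace_iff_forall_isClosed_preimage_zero.mpr fun s hs => ?_
  obtain ⟨f, hf, -⟩ := h s ∅ hs isClosed_empty (disjoint_empty s)
  refine ⟨⟨fun x => f x, by fun_prop⟩, ?_, fun x => (f x).2⟩
  rw [← hf]
  ext x
  exact Subtype.ext_iff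

end PreciseSeparation

namespace V

variable {X : Type*} [TopologicalSpace X]

theorem isClosed_singleton_L : IsClosed ({L} : Set V) :=
  isOpen_compl_iff.mp ⟨fun h => absurd rfl h, fun _ => nofun⟩

theorem isClosed_singleton_R : IsClosed ({R} : Set V) :=
  isOpen_compl_iff.mp ⟨fun _ => nofun, fun h => absurd rfl h⟩

theorem continuous_iff {χ : X → V} :
    Continuous χ ↔ IsClosed (χ ⁻¹' {L}) ∧ IsClosed (χ ⁻¹' {R}) := by
  refine ⟨fun h => ⟨isClosed_singleton_L.preimage h, isClosed_singleton_R.preimage h⟩,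
    fun ⟨hL, hR⟩ => continuous_def.mpr fun U ⟨hUL, hUR⟩ => ?_⟩
  have isOpen_imp {v : V} (hv : IsClosed (χ ⁻¹' {v})) (p : Prop) :
      IsOpen {x | χ x = v → p} := by
    by_cases hp : p
    · simp [hp]
    · simp only [hp, imp_false]
      exact hv.isOpen_compl
  by_cases hc : c ∈ U
  · convert (isOpen_imp hL (L ∈ U)).inter (isOpen_imp hR (R ∈ U)) using 1
    ext x
    cases hx : χ x <;> simp [hx, hc]
  · convert isOpen_empty
    ext x
    cases hx : χ x <;> simp_all

theorem exists_continuous_preimage_eq {s t : Set X} (hs : IsClosed s) (ht : IsClosed t)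
    (hst : Disjoint s t) : ∃ χ : X → V, Continuous χ ∧ χ ⁻¹' {L} = s ∧ χ ⁻¹' {R} = t := by
  classical
  let χ : X → V := fun x => if x ∈ s then L else if x ∈ t then R else c
  have hχL : χ ⁻¹' {L} = s := by
    ext x
    by_cases hxs : x ∈ s <;> by_cases hxt : x ∈ t <;> simp [χ, hxs, hxt]
  have hχR : χ ⁻¹' {R} = t := by
    ext x
    by_cases hxs : x ∈ s
    · simp [χ, hxs, hst.notMem_of_mem_left hxs]
    · simp [χ, hxs]
  exact ⟨χ, continuous_iff.mpr ⟨hχL ▸ hs, hχR ▸ ht⟩, hχL, hχR⟩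

end V

namespace J

def collapse : J → I
  | Sum.inl y => y
  | Sum.inr false => 0
  | Sum.inr true => 1

theorem isInducing_collapse : IsInducing collapse := by
  refine ⟨TopologicalSpace.ext <| funext fun U => propext ⟨fun hU => ?_, ?_⟩⟩
  · refine ⟨Sum.inl ⁻¹' U, hU.1, ?_⟩
    ext (y | _ | _)
    exacts [Iff.rfl, hU.2.1.symm, hU.2.2.symm]
  · rintro ⟨W, hW, rfl⟩
    exact ⟨hW, Iff.rfl, Iff.rfl⟩

theorem collapse_eq_zero_iff (z : J) : collapse z = 0 ↔ piJ z = V.L := by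
  rcases z with y | _ | _
  · simp only [collapse, piJ]
    split_ifs <;> simp_all
  all_goals simp [collapse, piJ]

theorem collapse_eq_one_iff (z : J) : collapse z = 1 ↔ piJ z = V.R := by
  rcases z with y | _ | _
  · simp only [collapse, piJ]
    split_ifs <;> simp_all
  all_goals simp [collapse, piJ]

def mk (y : I) : V → J
  | V.L => Sum.inr false
  | V.c => Sum.inl y
  | V.R => Sum.inr true

theorem collapse_mk {y : I} {v : V} (h0 : v = V.L → y = 0) (h1 : v = V.R → y = 1) :
    collapse (mk y v) = y := by
  cases v <;> simp_all [mk, collapse]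

theorem piJ_mk {y : I} {v : V} (h0 : y = 0 → v = V.L) (h1 : y = 1 → v = V.R) :
    piJ (mk y v) = v := by
  cases v <;> simp_all [mk, piJ]

end J

theorem exists_lift_iff_preciselySeparated {X : Type*} [TopologicalSpace X] (χ : X → V) :
    (∃ lam : X → J, Continuous lam ∧ piJ ∘ lam = χ) ↔
      PreciselySeparated (χ ⁻¹' {V.L}) (χ ⁻¹' {V.R}) := by
  constructor
  · rintro ⟨lam, hlam, rfl⟩
    refine ⟨⟨J.collapse ∘ lam, J.isInducing_collapse.continuous.comp hlam⟩, ?_, ?_⟩ <;> ext x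
    exacts [J.collapse_eq_zero_iff _, J.collapse_eq_one_iff _]
  · rintro ⟨f, hfL, hfR⟩
    have hf0 (x : X) : f x = 0 ↔ χ x = V.L := Set.ext_iff.mp hfL x
    have hf1 (x : X) : f x = 1 ↔ χ x = V.R := Set.ext_iff.mp hfR x
    have hcollapse : J.collapse ∘ (fun x => J.mk (f x) (χ x)) = f :=
      funext fun x => J.collapse_mk (hf0 x).mpr (hf1 x).mpr
    refine ⟨fun x => J.mk (f x) (χ x), ?_, funext fun x => J.piJ_mk (hf0 x).mp (hf1 x).mp⟩
    rw [J.isInducing_collapse.continuous_iff, hcollapse]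
    exact f.continuous

/-- `X` is perfectly normal iff every continuous `χ : X → V` lifts through
`π_J : J → V`. -/
theorem perfectlyNormal_iff_lifts (X : Type) [TopologicalSpace X] :
    PerfectlyNormalSpace X ↔
      ∀ χ : X → V, Continuous χ →
        ∃ lam : X → J, Continuous lam ∧ piJ ∘ lam = χ := by
  simp only [exists_lift_iff_preciselySeparated, perfectlyNormalSpace_iff_preciselySeparated]
  refine ⟨fun h χ hχ => ?_, fun h s t hs ht hst => ?_⟩
  · obtain ⟨hL, hR⟩ := V.continuous_iff.mp hχ
    exact h _ _ hL hR ((disjoint_singleton.mpr (nofun : V.L ≠ V.R)).preimage χ)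
  · obtain ⟨χ, hχ, rfl, rfl⟩ := V.exists_continuous_preimage_eq hs ht hst
    exact h χ hχ
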